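/- arXiv:math/9906055 — 2 statements merged into one kernel-verified Lean document; each statement's English description precedes it below -/
import Mathlib

section
/- Let f(U) = L U + N⁽²⁾(U) + N⁽³⁾(U) − b with L ∈ ℝⁿˣⁿ, b ∈ ℝⁿ, and N⁽²⁾, N⁽³⁾ : ℝⁿ → ℝⁿ differentiable and homogeneous of degrees 2 and 3. For U ∈ ℝⁿ with all entries nonzero, set w = 2 N⁽²⁾(U) + 3 N⁽³⁾(U), vᵢ = 1/(n Uᵢ), and define the pseudo-Jacobian matrix J̃(U) = L + w vᵀ. Then J̃(U) U = (Df(U))(U), i.e., the pseudo-Jacobian matrix agrees with the true Jacobian matrix of f in its action on the vector U. -/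
/-!
Differentiating `t ↦ N (t • U)` at `t = 1` gives Euler's identity `DN(U) U = m N(U)` for a
function homogeneous of degree `m`, so `Df(U) U = L U + 2 N⁽²⁾(U) + 3 N⁽³⁾(U) = L U + w`.
On the other side `(w vᵀ) U = (v ⬝ U) w = w`, because the weights `vᵢ = 1 / (n Uᵢ)` are chosen
so that `v ⬝ U = 1`.
-/

open Matrix

section Euler

variable {𝕜 E F : Type*} [NontriviallyNormedField 𝕜] [NormedAddCommGroup E] [NormedSpace 𝕜 E]
  [NormedAddCommGroup F] [NormedSpace 𝕜 F]

theorem DifferentiableAt.hasDerivAt_comp_smul_one {N : E → F} {x : E}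
    (hN : DifferentiableAt 𝕜 N x) :
    HasDerivAt (fun t : 𝕜 => N (t • x)) (fderiv 𝕜 N x x) 1 := by
  have hline : HasDerivAt (fun t : 𝕜 => t • x) x 1 := by
    simpa using (hasDerivAt_id (1 : 𝕜)).smul_const x
  rw [← one_smul 𝕜 x] at hN
  have hcomp := hN.hasFDerivAt.comp_hasDerivAt 1 hline
  rwa [one_smul] at hcomp

theorem fderiv_apply_self_of_homogeneous {N : E → F} {x : E} (m : ℕ)
    (hN : DifferentiableAt 𝕜 N x) (hhom : ∀ t : 𝕜, N (t • x) = t ^ m • N x) :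
    fderiv 𝕜 N x x = (m : 𝕜) • N x := by
  have hpow : HasDerivAt (fun t : 𝕜 => t ^ m • N x) ((m : 𝕜) • N x) 1 := by
    simpa using (hasDerivAt_pow m (1 : 𝕜)).smul_const (N x)
  exact hN.hasDerivAt_comp_smul_one.unique (by simpa only [hhom] using hpow)

end Euler

theorem dotProduct_eq_one_of_eq_inv_card_mul {ι K : Type*} [Fintype ι] [Nonempty ι] [Field K]
    [CharZero K] {U v : ι → K} (hU : ∀ i, U i ≠ 0)
    (hv : ∀ i, v i = 1 / (Fintype.card ι * U i)) : v ⬝ᵥ U = 1 := by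
  have hcard : (Fintype.card ι : K) ≠ 0 := Nat.cast_ne_zero.mpr Fintype.card_ne_zero
  have hterm : ∀ i, v i * U i = 1 / Fintype.card ι := fun i => by
    rw [hv i]
    field_simp [hU i]
  simp only [dotProduct, hterm, Finset.sum_const, Finset.card_univ, nsmul_eq_mul]
  field_simp

theorem add_vecMulVec_mulVec_of_dotProduct_eq_one {ι R : Type*} [Fintype ι] [CommRing R]
    (L : Matrix ι ι R) {w v U : ι → R} (h : v ⬝ᵥ U = 1) :
    (L + vecMulVec w v) *ᵥ U = L *ᵥ U + w := by
  rw [add_mulVec, vecMulVec_mulVec, h]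
  simp

/-- The pseudo-Jacobian matrix `J̃(U) = L + w vᵀ`, with
`w = 2 N² U + 3 N³ U` and `v i = 1 / (n * U i)`, agrees with the true Jacobian
of `f U = L U + N² U + N³ U − b` in its action on `U`. -/
theorem pseudo_newton_stmt3 (n : ℕ) (hn : 0 < n)
    (L : Matrix (Fin n) (Fin n) ℝ) (b : Fin n → ℝ)
    (N2 N3 : (Fin n → ℝ) → (Fin n → ℝ))
    (hdiff2 : Differentiable ℝ N2) (hdiff3 : Differentiable ℝ N3)
    (hhom2 : ∀ (t : ℝ) (U : Fin n → ℝ), N2 (t • U) = t ^ 2 • N2 U)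
    (hhom3 : ∀ (t : ℝ) (U : Fin n → ℝ), N3 (t • U) = t ^ 3 • N3 U)
    (f : (Fin n → ℝ) → (Fin n → ℝ))
    (hf : f = fun U => L.mulVec U + N2 U + N3 U - b)
    (U : Fin n → ℝ) (hU : ∀ i, U i ≠ 0)
    (w v : Fin n → ℝ)
    (hw : w = (2 : ℝ) • N2 U + (3 : ℝ) • N3 U)
    (hv : ∀ i, v i = 1 / (n * U i)) :
    (L + Matrix.vecMulVec w v).mulVec U = (fderiv ℝ f U) U := by
  have : Nonempty (Fin n) := Fin.pos_iff_nonempty.mp hn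
  have hdot : v ⬝ᵥ U = 1 :=
    dotProduct_eq_one_of_eq_inv_card_mul hU (by simpa only [Fintype.card_fin] using hv)
  have hf' : HasFDerivAt f
      ((mulVecLin L).toContinuousLinearMap + fderiv ℝ N2 U + fderiv ℝ N3 U) U := by
    rw [hf]
    exact ((((mulVecLin L).toContinuousLinearMap.hasFDerivAt).add
      (hdiff2 U).hasFDerivAt).add (hdiff3 U).hasFDerivAt).sub_const b
  rw [add_vecMulVec_mulVec_of_dotProduct_eq_one L hdot, hf'.fderiv, hw,
    _root_.add_apply, _root_.add_apply,
    fderiv_apply_self_of_homogeneous 2 (hdiff2 U) (hhom2 · U),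
    fderiv_apply_self_of_homogeneous 3 (hdiff3 U) (hhom3 · U)]
  simp [add_assoc]
end

section
/- Let f(U) = L U + N⁽²⁾(U) + N⁽³⁾(U) − b with L ∈ ℝⁿˣⁿ, b ∈ ℝⁿ, and maps N⁽²⁾, N⁽³⁾ : ℝⁿ → ℝⁿ. Suppose U ∈ ℝⁿ has all entries nonzero, f(U) = 0, and the pseudo-Jacobian matrix J̃(U) = L + w vᵀ (with w = 2 N⁽²⁾(U) + 3 N⁽³⁾(U) and vᵢ = 1/(n Uᵢ)) is invertible. Then U = J̃(U)⁻¹ (b + N⁽²⁾(U) + 2 N⁽³⁾(U)); that is, every root of f with nonzero entries is a fixed point of the pseudo-Newton iteration U⁽ᵏ⁺¹⁾ = J̃(U⁽ᵏ⁾)⁻¹ (b + N⁽²⁾(U⁽ᵏ⁾) + 2 N⁽³⁾(U⁽ᵏ⁾)). -/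
/-- Every root of `f` with nonzero entries is a fixed point of the
pseudo-Newton iteration: if `f U = 0` and the pseudo-Jacobian
`J̃(U) = L + w vᵀ` is invertible, then
`U = J̃(U)⁻¹ (b + N² U + 2 N³ U)`. -/
theorem pseudo_newton_stmt5 (n : ℕ) (hn : 0 < n)
    (L : Matrix (Fin n) (Fin n) ℝ) (b : Fin n → ℝ)
    (N2 N3 : (Fin n → ℝ) → (Fin n → ℝ))
    (f : (Fin n → ℝ) → (Fin n → ℝ))
    (hf : f = fun U => L.mulVec U + N2 U + N3 U - b)
    (U : Fin n → ℝ) (hU : ∀ i, U i ≠ 0)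
    (w v : Fin n → ℝ)
    (hw : w = (2 : ℝ) • N2 U + (3 : ℝ) • N3 U)
    (hv : ∀ i, v i = 1 / (n * U i))
    (hroot : f U = 0)
    (hinv : IsUnit (L + Matrix.vecMulVec w v)) :
    U = (L + Matrix.vecMulVec w v)⁻¹.mulVec (b + N2 U + (2 : ℝ) • N3 U) := by
  have hvU : dotProduct v U = 1 := by
    have : ∀ i, v i * U i = 1 / n := by
      intro i
      rw [hv i]
      field_simp [hU i]
    simp only [dotProduct, this, Finset.sum_const, Finset.card_univ,
      Fintype.card_fin, nsmul_eq_mul]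
    field_simp [hn.ne']
  have hA : (L + Matrix.vecMulVec w v).mulVec U = b + N2 U + (2 : ℝ) • N3 U := by
    have hroot' : L.mulVec U + N2 U + N3 U - b = 0 := by
      rw [hf] at hroot; exact hroot
    have hLU : L.mulVec U = b - N2 U - N3 U := by
      have h := sub_eq_zero.mp hroot'
      funext i
      have hi := congrFun h i
      simp only [Pi.add_apply, Pi.sub_apply] at hi ⊢
      linarith
    have hvm : (Matrix.vecMulVec w v).mulVec U = w := by
      funext i
      simp only [Matrix.mulVec, Matrix.vecMulVec_apply, dotProduct]
      rw [show ∑ j, w i * v j * U j = w i * ∑ j, v j * U j by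
        rw [Finset.mul_sum]; exact Finset.sum_congr rfl fun j _ => by ring]
      rw [show (∑ j, v j * U j) = dotProduct v U from rfl, hvU, mul_one]
    rw [Matrix.add_mulVec, hvm, hLU, hw]
    funext i
    simp [Pi.add_apply, Pi.sub_apply, Pi.smul_apply]
    ring
  calc U = ((L + Matrix.vecMulVec w v)⁻¹ * (L + Matrix.vecMulVec w v)).mulVec U := by
            rw [Matrix.nonsing_inv_mul _ ((Matrix.isUnit_iff_isUnit_det _).mp hinv),
              Matrix.one_mulVec]
    _ = (L + Matrix.vecMulVec w v)⁻¹.mulVec ((L + Matrix.vecMulVec w v).mulVec U) := by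
            rw [Matrix.mulVec_mulVec]
    _ = _ := by rw [hA]
end
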